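/- arXiv:2502.10592 — 2 statements merged into one kernel-verified Lean document; each statement's English description precedes it below -/
import Mathlib

section
/- Let m be a positive integer, T a type of time slots, slot : Fin m → T, D ⊆ Fin m a set of approved courses, and c ∈ ℕ a course cap. Let v be the constraint-based valuation v(S) = max { |R| : R ⪯ S, R feasible }, where a bundle R ∈ ℕ^m is feasible if (a) for every slot t, Σ_{g : slot(g) = t} R_g ≤ 1, (b) |R| ≤ c, and (c) R_g = 0 for every g ∉ D. Then for every bundle S ∈ ℕ^m, v(S) = min(c, |{ t : ∃ g ∈ D, slot(g) = t and S_g ≥ 1 }|): the value of a bundle equals the number of time slots covered by its approved courses, truncated at the cap c. -/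
/-- A bundle `R` is feasible if it uses at most one course per time slot, has total size at
most the cap `c`, and only contains approved courses. -/
def scheduleFeasible {m : ℕ} {T : Type*} [DecidableEq T] (slot : Fin m → T)
    (D : Finset (Fin m)) (c : ℕ) (R : Fin m → ℕ) : Prop :=
  (∀ t : T, ∑ g ∈ Finset.univ.filter fun g => slot g = t, R g ≤ 1) ∧
    (∑ g, R g ≤ c) ∧ (∀ g, g ∉ D → R g = 0)

/-- The constraint-based valuation determined by the scheduling constraints: the largest
size of a feasible sub-bundle. -/
noncomputable def scheduleVal {m : ℕ} {T : Type*} [DecidableEq T] (slot : Fin m → T)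
    (D : Finset (Fin m)) (c : ℕ) (S : Fin m → ℕ) : ℕ :=
  sSup {k | ∃ R : Fin m → ℕ, (∀ g, R g ≤ S g) ∧
    scheduleFeasible slot D c R ∧ ∑ g, R g = k}

/-- The value of a bundle under the scheduling constraints equals the number of time slots
covered by its approved courses, truncated at the cap `c`. -/
theorem scheduleVal_eq_min_cap_coverage {m : ℕ} (hm : 0 < m) {T : Type*} [DecidableEq T]
    (slot : Fin m → T) (D : Finset (Fin m)) (c : ℕ) (S : Fin m → ℕ) :
    scheduleVal slot D c S =
      min c ((D.filter fun g => 1 ≤ S g).image slot).card := by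
  classical
  set E : Finset (Fin m) := D.filter fun g => 1 ≤ S g with hE
  set I : Finset T := E.image slot with hI
  -- upper bound for every element of the set
  have hub : ∀ k ∈ {k | ∃ R : Fin m → ℕ, (∀ g, R g ≤ S g) ∧
      scheduleFeasible slot D c R ∧ ∑ g, R g = k}, k ≤ min c I.card := by
    rintro k ⟨R, hRS, ⟨hslot, hcap, happ⟩, rfl⟩
    refine le_min hcap ?_
    have hsupp : ∀ g : Fin m, R g ≠ 0 → slot g ∈ I := by
      intro g hg
      have hgD : g ∈ D := by by_contra h; exact hg (happ g h)
      have hgS : 1 ≤ S g := le_trans (Nat.one_le_iff_ne_zero.mpr hg) (hRS g)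
      exact Finset.mem_image.mpr ⟨g, Finset.mem_filter.mpr ⟨hgD, hgS⟩, rfl⟩
    have h1 : ∑ g, R g = ∑ g ∈ Finset.univ.filter (fun g => slot g ∈ I), R g := by
      refine (Finset.sum_subset (Finset.filter_subset _ _) ?_).symm
      intro g _ hg
      by_contra h
      exact hg (Finset.mem_filter.mpr ⟨Finset.mem_univ g, hsupp g h⟩)
    have h2 : ∑ g ∈ Finset.univ.filter (fun g => slot g ∈ I), R g
        = ∑ t ∈ I, ∑ g ∈ (Finset.univ.filter (fun g => slot g ∈ I)).filter
            (fun g => slot g = t), R g := by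
      refine (Finset.sum_fiberwise_of_maps_to ?_ _).symm
      intro g hg; exact (Finset.mem_filter.mp hg).2
    rw [h1, h2]
    calc ∑ t ∈ I, ∑ g ∈ (Finset.univ.filter (fun g => slot g ∈ I)).filter
            (fun g => slot g = t), R g
        ≤ ∑ t ∈ I, 1 := by
          refine Finset.sum_le_sum fun t _ => ?_
          refine le_trans (Finset.sum_le_sum_of_subset ?_) (hslot t)
          intro g hg
          simp only [Finset.mem_filter, Finset.mem_univ, true_and] at hg ⊢
          exact hg.2
      _ = I.card := by simp
  have hne : (0 : ℕ) ∈ {k | ∃ R : Fin m → ℕ, (∀ g, R g ≤ S g) ∧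
      scheduleFeasible slot D c R ∧ ∑ g, R g = k} := by
    exact ⟨fun _ => 0, fun g => Nat.zero_le _, ⟨fun t => by simp, by simp, fun g _ => rfl⟩,
      by simp⟩
  -- achievability of min c I.card
  -- choose a witness set G ⊆ E with slot injective on G and image I
  have hGex : ∃ G : Finset (Fin m), G ⊆ E ∧ G.card = I.card ∧
      ∀ a ∈ G, ∀ b ∈ G, slot a = slot b → a = b := by
    have : ∀ t ∈ I, ∃ g ∈ E, slot g = t := fun t ht => Finset.mem_image.mp ht
    choose w hwE hws using this
    refine ⟨I.attach.image (fun t => w t.1 t.2), ?_, ?_, ?_⟩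
    · intro g hg
      obtain ⟨t, _, rfl⟩ := Finset.mem_image.mp hg
      exact hwE t.1 t.2
    · rw [Finset.card_image_of_injective _ ?_, Finset.card_attach]
      intro a b hab
      apply Subtype.ext
      rw [← hws a.1 a.2, ← hws b.1 b.2]
      exact congrArg slot hab
    · intro a ha b hb hab
      obtain ⟨t1, _, rfl⟩ := Finset.mem_image.mp ha
      obtain ⟨t2, _, rfl⟩ := Finset.mem_image.mp hb
      rw [hws t1.1 t1.2, hws t2.1 t2.2] at hab
      rw [Subtype.ext hab]
  obtain ⟨G, hGE, hGcard, hGinj⟩ := hGex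
  obtain ⟨G', hG'G, hG'card⟩ := Finset.exists_subset_card_eq
    (show min c I.card ≤ G.card by rw [hGcard]; exact min_le_right _ _)
  have hach : min c I.card ∈ {k | ∃ R : Fin m → ℕ, (∀ g, R g ≤ S g) ∧
      scheduleFeasible slot D c R ∧ ∑ g, R g = k} := by
    refine ⟨fun g => if g ∈ G' then 1 else 0, ?_, ⟨?_, ?_, ?_⟩, ?_⟩
    · intro g
      by_cases h : g ∈ G'
      · simp only [h, if_true]
        exact (Finset.mem_filter.mp (hGE (hG'G h))).2
      · simp [h]
    · intro t
      have : (Finset.univ.filter fun g => slot g = t).filter (fun g => g ∈ G') ⊆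
          Finset.univ.filter fun g => slot g = t := Finset.filter_subset _ _
      rw [← Finset.sum_filter]
      simp only [Finset.sum_const, smul_eq_mul, mul_one]
      by_contra h
      push_neg at h
      obtain ⟨a, ha, b, hb, hab⟩ := Finset.one_lt_card.mp h
      simp only [Finset.mem_filter, Finset.mem_univ, true_and] at ha hb
      exact hab (hGinj a (hG'G ha.2) b (hG'G hb.2) (ha.1.trans hb.1.symm))
    · rw [← Finset.sum_filter]
      simp only [Finset.sum_const, smul_eq_mul, mul_one]
      calc ((Finset.univ.filter fun g => g ∈ G')).card = G'.card := by
            congr 1; ext g; simp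
        _ ≤ c := by rw [hG'card]; exact min_le_left _ _
    · intro g hg
      have : g ∉ G' := fun h => hg (Finset.mem_filter.mp (hGE (hG'G h))).1
      simp [this]
    · rw [← Finset.sum_filter]
      simp only [Finset.sum_const, smul_eq_mul, mul_one]
      calc ((Finset.univ.filter fun g => g ∈ G')).card = G'.card := by
            congr 1; ext g; simp
        _ = min c I.card := hG'card
  refine le_antisymm (csSup_le ⟨0, hne⟩ hub) (le_csSup ⟨min c I.card, hub⟩ hach)
end

section
/- Submodularity can fail for constraint-based valuations when course conflicts are not transitive. Concretely, with m = 3 items A, B, C, let Z be the 2 × 3 matrix with rows (1, 1, 0) and (0, 1, 1) and let b = (1, 1), encoding that A conflicts with B and B conflicts with C but A does not conflict with C, and let v(S) = max { |T| : T ⪯ S, Z T ≤ b }. Then v((0,1,0)) = 1, v((0,1,1)) = 1, v((1,1,0)) = 1, and v((1,1,1)) = 2; hence for S = (0,1,0) ⪯ T = (1,1,0) and item C one has v(T + 𝟙_C) − v(T) = 1 > 0 = v(S + 𝟙_C) − v(S), so v is not submodular. -/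
open Matrix

/-- The constraint-based valuation: `v S` is the largest total size `|T|` of a bundle
`T ⪯ S` satisfying the linear constraints `Z T ≤ b`. -/
noncomputable def constraintVal {r m : ℕ} (Z : Matrix (Fin r) (Fin m) ℕ) (b : Fin r → ℕ)
    (S : Fin m → ℕ) : ℕ :=
  sSup {k | ∃ T : Fin m → ℕ, (∀ g, T g ≤ S g) ∧ (∀ i, Z.mulVec T i ≤ b i) ∧ ∑ g, T g = k}

lemma constraintVal_eq {r m : ℕ} (Z : Matrix (Fin r) (Fin m) ℕ) (b : Fin r → ℕ)
    (S : Fin m → ℕ) (k : ℕ)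
    (h1 : ∃ T : Fin m → ℕ, (∀ g, T g ≤ S g) ∧ (∀ i, Z.mulVec T i ≤ b i) ∧ ∑ g, T g = k)
    (h2 : ∀ x ∈ {k | ∃ T : Fin m → ℕ,
      (∀ g, T g ≤ S g) ∧ (∀ i, Z.mulVec T i ≤ b i) ∧ ∑ g, T g = k}, x ≤ k) :
    constraintVal Z b S = k :=
  le_antisymm (csSup_le ⟨k, h1⟩ h2) (le_csSup ⟨k, h2⟩ h1)

/-- Submodularity fails for constraint-based valuations with non-transitive conflicts:
with items `(A, B, C)`, constraints saying `A` conflicts with `B` and `B` conflicts with `C`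
(but not `A` with `C`), we get `v (0,1,0) = v (0,1,1) = v (1,1,0) = 1` and `v (1,1,1) = 2`,
so adding `C` to `(1,1,0)` gains more than adding `C` to `(0,1,0) ⪯ (1,1,0)`; hence `v` is
not submodular. -/
theorem constraintVal_not_submodular :
    let Z : Matrix (Fin 2) (Fin 3) ℕ := !![1, 1, 0; 0, 1, 1]
    let b : Fin 2 → ℕ := ![1, 1]
    let v := constraintVal Z b
    v ![0, 1, 0] = 1 ∧ v ![0, 1, 1] = 1 ∧ v ![1, 1, 0] = 1 ∧ v ![1, 1, 1] = 2 ∧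
      v (![1, 1, 0] + Pi.single 2 1) + v ![0, 1, 0] >
        v (![0, 1, 0] + Pi.single 2 1) + v ![1, 1, 0] ∧
      ¬ (∀ (S T : Fin 3 → ℕ) (g : Fin 3), (∀ h, S h ≤ T h) →
        v (T + Pi.single g 1) + v S ≤ v (S + Pi.single g 1) + v T) := by
  intro Z b v
  have e1 : (![1, 1, 0] + Pi.single 2 1 : Fin 3 → ℕ) = ![1, 1, 1] := by
    ext i; fin_cases i <;> simp
  have e2 : (![0, 1, 0] + Pi.single 2 1 : Fin 3 → ℕ) = ![0, 1, 1] := by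
    ext i; fin_cases i <;> simp
  have h010 : v ![0, 1, 0] = 1 := by
    apply constraintVal_eq
    · exact ⟨![0, 1, 0], by decide, by decide, by decide⟩
    · rintro x ⟨T, hle, hc, rfl⟩
      have h0 := hle 0; have h1 := hle 1; have h2 := hle 2
      simp [Fin.sum_univ_three] at *
      omega
  have h011 : v ![0, 1, 1] = 1 := by
    apply constraintVal_eq
    · exact ⟨![0, 1, 0], by decide, by decide, by decide⟩
    · rintro x ⟨T, hle, hc, rfl⟩
      have h0 := hle 0
      have hc1 := hc 1
      simp [Z, b, Matrix.mulVec, dotProduct, Fin.sum_univ_three] at *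
      omega
  have h110 : v ![1, 1, 0] = 1 := by
    apply constraintVal_eq
    · exact ⟨![0, 1, 0], by decide, by decide, by decide⟩
    · rintro x ⟨T, hle, hc, rfl⟩
      have h2 := hle 2
      have hc0 := hc 0
      simp [Z, b, Matrix.mulVec, dotProduct, Fin.sum_univ_three] at *
      omega
  have h111 : v ![1, 1, 1] = 2 := by
    apply constraintVal_eq
    · exact ⟨![1, 0, 1], by decide, by decide, by decide⟩
    · rintro x ⟨T, hle, hc, rfl⟩
      have hc0 := hc 0
      have hc1 := hc 1
      simp [Z, b, Matrix.mulVec, dotProduct, Fin.sum_univ_three] at *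
      omega
  refine ⟨h010, h011, h110, h111, ?_, ?_⟩
  · rw [e1, e2, h111, h010, h011, h110]; norm_num
  · intro hall
    have := hall ![0, 1, 0] ![1, 1, 0] 2 (by decide)
    rw [e1, e2, h111, h010, h011, h110] at this
    omega
end
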